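/- arXiv:2405.02990 — 2 statements merged into one kernel-verified Lean document; each statement's English description precedes it below -/
import Mathlib

section
/- Every exact frame homomorphism f : L → M is a D-morphism: for every covered prime p of M, the element f∗(p) is a covered prime of L, where f∗ is the right adjoint of f. -/
/-- A meet (of the set `S`) is exact if it distributes over all joins. -/
def IsExactMeet {L : Type*} [Order.Frame L] (S : Set L) : Prop :=
  ∀ b : L, sInf ((· ⊔ b) '' S) = sInf S ⊔ b

/-- A prime element of a frame. -/
def IsPrimeElem {L : Type*} [Order.Frame L] (p : L) : Prop :=
  ∀ x y : L, x ⊓ y ≤ p → x ≤ p ∨ y ≤ p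

/-- A covered element: whenever `⋀ S = p`, some element of `S` equals `p`. -/
def IsCovered {L : Type*} [Order.Frame L] (p : L) : Prop :=
  ∀ S : Set L, sInf S = p → p ∈ S

/-!
Write `a = f∗ p = ⋁ {x | f x ≤ p}`. Primeness of `a` follows from `f` preserving binary meets.
If `a` were not covered, then `a = ⋀ (a, ⊤]`, and in a frame this meet is exact; exactness
of `f` then gives `⋀ {f x ⊔ p | a < x} = f a ⊔ p = p`, so covering of `p` yields some `x > a`
with `f x ≤ p`, contradicting `x ≤ f∗ p = a`.
-/

open Set

theorem le_sSup_setOf_map_le_iff {L M F : Type*} [CompleteLattice L] [CompleteLattice M]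
    [FunLike F L M] [sSupHomClass F L M] (f : F) {x : L} {m : M} :
    x ≤ sSup {y | f y ≤ m} ↔ f x ≤ m := by
  refine ⟨fun hx => (OrderHomClass.mono f hx).trans ?_, fun hx => le_sSup hx⟩
  rw [map_sSup]
  exact sSup_le (by rintro _ ⟨y, hy, rfl⟩; exact hy)

theorem IsPrimeElem.sSup_setOf_map_le {L M : Type*} [Order.Frame L] [Order.Frame M]
    (f : FrameHom L M) {p : M} (hp : IsPrimeElem p) : IsPrimeElem (sSup {x : L | f x ≤ p}) := by
  intro x y hxy
  simp only [le_sSup_setOf_map_le_iff, map_inf] at hxy ⊢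
  exact hp _ _ hxy

theorem isCovered_of_sInf_Ioi_ne {L : Type*} [Order.Frame L] {a : L} (h : sInf (Ioi a) ≠ a) :
    IsCovered a := by
  intro S hS
  by_contra ha
  have hSa : S ⊆ Ioi a := fun s hs => (hS ▸ sInf_le hs).lt_of_ne (by rintro rfl; exact ha hs)
  exact h (le_antisymm ((sInf_le_sInf hSa).trans hS.le) (le_sInf fun _ hx => hx.le))

theorem isExactMeet_Ioi {L : Type*} [Order.Frame L] {a : L} (h : sInf (Ioi a) = a) :
    IsExactMeet (Ioi a) := by
  intro b
  rw [h]
  refine le_antisymm ?_ (le_sInf ?_)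
  · by_cases hba : b ≤ a
    · have himage : (· ⊔ b) '' Ioi a = Ioi a :=
        (image_congr fun x hx => sup_eq_left.mpr (hba.trans (le_of_lt hx))).trans (image_id _)
      rw [himage, h]
      exact le_sup_left
    · set m := sInf ((· ⊔ b) '' Ioi a)
      -- the Heyting implication `m ⇨ a ⊔ b` lies strictly above `a`, and cuts `m` down to `a ⊔ b`
      have hab : a ⊔ b ≤ m ⇨ a ⊔ b := le_himp_iff.mpr inf_le_left
      have hlt : a < m ⇨ a ⊔ b :=
        (le_sup_left.trans hab).lt_of_ne fun he => hba (le_sup_right.trans (hab.trans he.ge))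
      have hm : m ≤ (m ⇨ a ⊔ b) ⊔ b := sInf_le ⟨_, hlt, rfl⟩
      calc m = m ⊓ ((m ⇨ a ⊔ b) ⊔ b) := (inf_eq_left.mpr hm).symm
        _ = (m ⊓ (m ⇨ a ⊔ b)) ⊔ (m ⊓ b) := inf_sup_left _ _ _
        _ ≤ (a ⊔ b) ⊔ b := sup_le_sup inf_himp_le inf_le_right
        _ = a ⊔ b := by rw [sup_assoc, sup_idem]
  · rintro _ ⟨x, hx, rfl⟩
    exact sup_le_sup_right hx.le b

/-- Every exact frame homomorphism is a D-morphism: the right adjoint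
`f∗(m) = ⋁{x | f x ≤ m}` sends covered primes to covered primes. -/
theorem stmt12 {L M : Type*} [Order.Frame L] [Order.Frame M] (f : FrameHom L M)
    (hf : ∀ S : Set L, IsExactMeet S → IsExactMeet (f '' S) ∧ sInf (f '' S) = f (sInf S))
    (p : M) (hp : IsPrimeElem p) (hcov : IsCovered p) :
    IsPrimeElem (sSup {x : L | f x ≤ p}) ∧ IsCovered (sSup {x : L | f x ≤ p}) := by
  set a := sSup {x : L | f x ≤ p}
  have hfa : f a ≤ p := (le_sSup_setOf_map_le_iff f).mp le_rfl
  refine ⟨hp.sSup_setOf_map_le f, isCovered_of_sInf_Ioi_ne fun ha => ?_⟩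
  obtain ⟨hexact, hinf⟩ := hf _ (isExactMeet_Ioi ha)
  have hmeet : sInf ((· ⊔ p) '' (f '' Ioi a)) = p := by
    rw [hexact p, hinf, ha, sup_eq_right.mpr hfa]
  obtain ⟨_, ⟨x, hxa, rfl⟩, hxp⟩ := hcov _ hmeet
  exact (lt_irrefl a) (hxa.trans_le ((le_sSup_setOf_map_le_iff f).mpr (sup_eq_right.mp hxp)))
end

section
/- For any frame homomorphism f : L → M, the preimage of every strongly exact filter of M is a strongly exact filter of L. -/
/-- A meet (of the set `S`) is strongly exact. -/
def IsStronglyExactMeet {L : Type*} [Order.Frame L] (S : Set L) : Prop :=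
  ∀ y : L, (∀ x ∈ S, x ⇨ y = y) → sInf S ⇨ y = y

/-- A filter of a frame: contains ⊤, upward closed, closed under binary meets. -/
def IsFrameFilter {L : Type*} [Order.Frame L] (F : Set L) : Prop :=
  ⊤ ∈ F ∧ (∀ x ∈ F, ∀ y : L, x ≤ y → y ∈ F) ∧ ∀ x ∈ F, ∀ y ∈ F, x ⊓ y ∈ F

/-- A strongly exact filter: a filter closed under strongly exact meets. -/
def IsStronglyExactFilter {L : Type*} [Order.Frame L] (F : Set L) : Prop :=
  IsFrameFilter F ∧ ∀ S : Set L, S ⊆ F → IsStronglyExactMeet S → sInf S ∈ F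

theorem sInf_le_of_himp_eq {L : Type*} [Order.Frame L] {T : Set L} {c : L}
    (h : ∀ y, (∀ t ∈ T, t ⇨ y = y) → c ⇨ y = y) : sInf T ≤ c := by
  have hc := h (sInf T ⇨ c) fun t ht => by rw [himp_himp, inf_eq_right.2 (sInf_le ht)]
  rwa [himp_eq_top_iff.2 le_himp, eq_comm, himp_eq_top_iff] at hc

def FrameHom.rightAdjoint {L M : Type*} [Order.Frame L] [Order.Frame M] (f : FrameHom L M)
    (y : M) : L :=
  sSup {x | f x ≤ y}

namespace FrameHom

variable {L M : Type*} [Order.Frame L] [Order.Frame M] (f : FrameHom L M)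

theorem gc_rightAdjoint : GaloisConnection f f.rightAdjoint := fun _ _ =>
  ⟨fun h => le_sSup h, fun h =>
    (OrderHomClass.mono f h).trans <| by
      rw [rightAdjoint, map_sSup]
      exact sSup_le (Set.forall_mem_image.2 fun _ hw => hw)⟩

theorem rightAdjoint_himp (x : L) (y : M) :
    f.rightAdjoint (f x ⇨ y) = x ⇨ f.rightAdjoint y :=
  eq_of_forall_le_iff fun w => by
    rw [← f.gc_rightAdjoint, le_himp_iff, le_himp_iff, ← f.gc_rightAdjoint, map_inf]

/-- Test strong exactness of `S` against `g (z ⇨ y)`, for `g` the right adjoint of `f`, and take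
`z = f (sInf S) ⇨ y`. -/
theorem himp_map_sInf_eq {S : Set L} (hS : IsStronglyExactMeet S) {y : M}
    (hy : ∀ x ∈ S, f x ⇨ y = y) : f (sInf S) ⇨ y = y := by
  have absorb : ∀ z, f.rightAdjoint (f (sInf S) ⇨ z ⇨ y) = f.rightAdjoint (z ⇨ y) := by
    intro z
    rw [rightAdjoint_himp]
    refine hS _ fun x hx => ?_
    rw [← rightAdjoint_himp, himp_left_comm, hy x hx]
  refine le_antisymm ?_ le_himp
  set z := f (sInf S) ⇨ y
  have htop : f.rightAdjoint (z ⇨ y) = ⊤ := by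
    rw [← absorb, himp_eq_top_iff.2 (le_himp_comm.2 le_rfl), f.gc_rightAdjoint.u_top]
  have : f ⊤ ≤ z ⇨ y := f.gc_rightAdjoint.le_iff_le.2 htop.ge
  rwa [map_top, le_himp_iff, top_inf_eq] at this

theorem map_sInf_of_isStronglyExactMeet {S : Set L} (hS : IsStronglyExactMeet S) :
    f (sInf S) = sInf (f '' S) :=
  le_antisymm ((OrderHomClass.mono f).map_sInf_le.trans_eq sInf_image.symm) <|
    sInf_le_of_himp_eq fun _ hy =>
      f.himp_map_sInf_eq hS fun _ hx => hy _ (Set.mem_image_of_mem f hx)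

theorem isStronglyExactMeet_image {S : Set L} (hS : IsStronglyExactMeet S) :
    IsStronglyExactMeet (f '' S) := fun _ hy => by
  rw [← f.map_sInf_of_isStronglyExactMeet hS]
  exact f.himp_map_sInf_eq hS fun _ hx => hy _ (Set.mem_image_of_mem f hx)

end FrameHom

theorem IsFrameFilter.preimage {L M : Type*} [Order.Frame L] [Order.Frame M] (f : FrameHom L M)
    {G : Set M} (hG : IsFrameFilter G) : IsFrameFilter (f ⁻¹' G) := by
  obtain ⟨htop, hup, hinf⟩ := hG
  refine ⟨?_, fun x hx y hxy => hup _ hx _ (OrderHomClass.mono f hxy), fun x hx y hy => ?_⟩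
  · rw [Set.mem_preimage, map_top]; exact htop
  · rw [Set.mem_preimage, map_inf]; exact hinf _ hx _ hy

/-- For any frame homomorphism, the preimage of a strongly exact filter is a
strongly exact filter. -/
theorem stmt13 {L M : Type*} [Order.Frame L] [Order.Frame M] (f : FrameHom L M)
    (G : Set M) (hG : IsStronglyExactFilter G) :
    IsStronglyExactFilter (f ⁻¹' G) := by
  obtain ⟨hfilter, hclosed⟩ := hG
  refine ⟨hfilter.preimage f, fun S hS hSE => ?_⟩
  rw [Set.mem_preimage, f.map_sInf_of_isStronglyExactMeet hSE]
  exact hclosed _ (Set.image_subset_iff.2 hS) (f.isStronglyExactMeet_image hSE)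
end
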